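/- In type D_r with r > 3 (Δ = {±e_i ± e_j : i ≠ j} ⊆ ℝ^r), if Π' ⊆ Π is an indecomposable system of simple roots of cardinality r − 2, then |Δ ∩ span(Π')| ≥ (r−1)(r−2), and consequently |Δ \ span(Π')| ≤ (r−1)(r+2). -/

import Mathlib

open Set

noncomputable section

/-- The `i`-th standard basis vector of ℝ^r. -/
def eV (r : ℕ) (i : Fin r) : EuclideanSpace ℝ (Fin r) := EuclideanSpace.single i 1

/-- The root system of type D_r: Δ = {±e_i ± e_j : i ≠ j}. -/
def rootsD (r : ℕ) : Set (EuclideanSpace ℝ (Fin r)) :=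
  {v | ∃ i j, i ≠ j ∧ ∃ s t : ℝ, (s = 1 ∨ s = -1) ∧ (t = 1 ∨ t = -1) ∧
      v = s • eV r i + t • eV r j}

/-- The standard simple system of type D_r:
α_i = e_i − e_{i+1} (1 ≤ i ≤ r−1) and α_r = e_{r−1} + e_r. -/
def simpleD (r : ℕ) : Set (EuclideanSpace ℝ (Fin r)) :=
  {v | (∃ i j : Fin r, (j : ℕ) = (i : ℕ) + 1 ∧ v = eV r i - eV r j) ∨
    (∃ i j : Fin r, (i : ℕ) = r - 2 ∧ (j : ℕ) = r - 1 ∧ v = eV r i + eV r j)}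

/-- A set of roots is indecomposable if it admits no splitting into two nonempty
mutually orthogonal parts. -/
def Indecomposable {r : ℕ} (S : Set (EuclideanSpace ℝ (Fin r))) : Prop :=
  ∀ S₁ S₂ : Set (EuclideanSpace ℝ (Fin r)), S₁ ∪ S₂ = S → S₁ ∩ S₂ = ∅ →
    S₁.Nonempty → S₂.Nonempty → ∃ a ∈ S₁, ∃ b ∈ S₂, (inner ℝ a b : ℝ) ≠ 0

/-!
Write `α_k = e_k - e_{k+1}` (`0 ≤ k ≤ r - 2`, indices from `0`) and `β = e_{r-2} + e_{r-1}`: the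
Dynkin diagram of `simpleD r` is the chain `α_0 - ⋯ - α_{r-3}` with `α_{r-2}` and `β` both attached
to `α_{r-3}`. A connected subdiagram with `r - 2` nodes omits `{α_{r-2}, β}`, `{α_0, β}`,
`{α_0, α_{r-2}}` or `{α_0, α_1}`, the last being connected only for `r ≥ 5`. In the first three
cases consecutive differences of `r - 1` signed basis vectors `σ_k e_k` lie in `Π'` (the sign
`σ_{r-1} = -1` turns `β` into such a difference), so the span of `Π'` contains the `(r-1)(r-2)`
roots `σ_i e_i - σ_j e_j`. In the last case it contains `e_2, …, e_{r-1}`, hence the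
`2(r-2)(r-3) ≥ (r-1)(r-2)` roots `±e_i ± e_j`. The second bound follows from `|Δ| ≤ 2r(r-1)`.
-/

section

variable {r : ℕ} {P : Set (EuclideanSpace ℝ (Fin r))}

/-- `e_k` indexed by a natural number, with the junk value `0` for `k ≥ r`. -/
def stdVec (r k : ℕ) : EuclideanSpace ℝ (Fin r) :=
  if h : k < r then eV r ⟨k, h⟩ else 0

lemma stdVec_val (i : Fin r) : stdVec r i = eV r i := by
  simp [stdVec]

lemma stdVec_apply (k : ℕ) (x : Fin r) : stdVec r k x = if k = x then 1 else 0 := by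
  unfold stdVec eV
  split_ifs <;> simp_all [Fin.ext_iff]

lemma inner_stdVec (a b : ℕ) :
    (inner ℝ (stdVec r a) (stdVec r b) : ℝ) = if a = b ∧ a < r then 1 else 0 := by
  unfold stdVec eV
  split_ifs <;> simp_all [EuclideanSpace.inner_single_left, Fin.ext_iff] <;> omega

lemma smul_stdVec_add_smul_stdVec_apply (s t : ℝ) (i j : ℕ) (x : Fin r) :
    (s • stdVec r i + t • stdVec r j) x = (if i = x then s else 0) + if j = x then t else 0 := by
  simp [stdVec_apply]

lemma eq_or_eq_of_smul_stdVec_add_smul_stdVec_eq {i j k l : ℕ} {s t u v : ℝ}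
    (hi : i < r) (hj : j < r) (hij : i ≠ j) (hs : s ≠ 0) (ht : t ≠ 0)
    (h : s • stdVec r i + t • stdVec r j = u • stdVec r k + v • stdVec r l) :
    (i = k ∧ j = l ∧ s = u ∧ t = v) ∨ (i = l ∧ j = k ∧ s = v ∧ t = u) := by
  -- the coordinates `i` and `j` of both sides already decide everything
  have hx := congrArg (· ⟨i, hi⟩) h
  have hy := congrArg (· ⟨j, hj⟩) h
  simp only [smul_stdVec_add_smul_stdVec_apply] at hx hy
  split_ifs at hx hy <;> first
    | (left; refine ⟨?_, ?_, ?_, ?_⟩ <;> first | omega | linarith)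
    | (right; refine ⟨?_, ?_, ?_, ?_⟩ <;> first | omega | linarith)
    | (exfalso; first | omega | exact hs (by linarith) | exact ht (by linarith))

lemma smul_stdVec_add_smul_stdVec_mem_rootsD {i j : ℕ} {s t : ℝ} (hi : i < r) (hj : j < r)
    (hij : i ≠ j) (hs : s = 1 ∨ s = -1) (ht : t = 1 ∨ t = -1) :
    s • stdVec r i + t • stdVec r j ∈ rootsD r :=
  ⟨⟨i, hi⟩, ⟨j, hj⟩, by simpa [Fin.ext_iff] using hij, s, t, hs, ht, by
    rw [← stdVec_val, ← stdVec_val]⟩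

/-- The parameters `((i, j), s)`, `((j, i), s)` with `s = ±1` give each of the four roots
`±e_i ± e_j` exactly once. -/
def signedPairRoot (r : ℕ) (p : (ℕ × ℕ) × ℝ) : EuclideanSpace ℝ (Fin r) :=
  p.2 • stdVec r p.1.1 + (if p.1.1 < p.1.2 then p.2 else -p.2) • stdVec r p.1.2

def signedPairParams (lo n : ℕ) : Finset ((ℕ × ℕ) × ℝ) :=
  (Finset.Ico lo (lo + n)).offDiag ×ˢ {1, -1}

lemma mem_signedPairParams {lo n : ℕ} {p : (ℕ × ℕ) × ℝ} :
    p ∈ signedPairParams lo n ↔ (lo ≤ p.1.1 ∧ p.1.1 < lo + n) ∧ (lo ≤ p.1.2 ∧ p.1.2 < lo + n) ∧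
      p.1.1 ≠ p.1.2 ∧ (p.2 = 1 ∨ p.2 = -1) := by
  simp [signedPairParams, and_assoc]

lemma card_signedPairParams (lo n : ℕ) : (signedPairParams lo n).card = 2 * n * (n - 1) := by
  rw [signedPairParams, Finset.card_product, Finset.offDiag_card, Nat.card_Ico,
    Nat.add_sub_cancel_left, ← Nat.mul_sub_one, Finset.card_pair (by norm_num)]
  ring

lemma signedPairRoot_mem_rootsD {lo n : ℕ} (hn : lo + n ≤ r) {p : (ℕ × ℕ) × ℝ}
    (hp : p ∈ signedPairParams lo n) : signedPairRoot r p ∈ rootsD r := by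
  rw [mem_signedPairParams] at hp
  refine smul_stdVec_add_smul_stdVec_mem_rootsD (by omega) (by omega) hp.2.2.1 hp.2.2.2 ?_
  split_ifs <;> rcases hp.2.2.2 with h | h <;> simp [h]

lemma signedPairRoot_injOn {lo n : ℕ} (hn : lo + n ≤ r) :
    Set.InjOn (signedPairRoot r) (signedPairParams lo n) := by
  rintro ⟨⟨i, j⟩, s⟩ hp ⟨⟨k, l⟩, u⟩ - h
  simp only [Finset.mem_coe, mem_signedPairParams] at hp
  have hs : s ≠ 0 := by rcases hp.2.2.2 with h | h <;> simp [h]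
  have ht : (if i < j then s else -s) ≠ 0 := by split_ifs <;> simpa
  rcases eq_or_eq_of_smul_stdVec_add_smul_stdVec_eq (by omega) (by omega) hp.2.2.1 hs
    ht h with ⟨rfl, rfl, rfl, -⟩ | ⟨rfl, rfl, h₁, h₂⟩
  · rfl
  · exfalso
    rcases lt_or_gt_of_ne hp.2.2.1 with hij | hji
    · simp only [if_pos hij, if_neg hij.not_gt] at h₁ h₂
      exact hs (by linarith)
    · simp only [if_neg hji.not_gt, if_pos hji] at h₁ h₂
      exact hs (by linarith)

lemma rootsD_subset_image_signedPairRoot (r : ℕ) :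
    rootsD r ⊆ signedPairRoot r '' signedPairParams 0 r := by
  rintro v ⟨i, j, hij, s, t, hs, ht, rfl⟩
  have hij' : (i : ℕ) ≠ j := Fin.val_ne_of_ne hij
  have hmem : ∀ a b : Fin r, (a : ℕ) ≠ b → ∀ u : ℝ, (u = 1 ∨ u = -1) →
      (((a : ℕ), (b : ℕ)), u) ∈ signedPairParams 0 r := fun a b hab u hu =>
    mem_signedPairParams.2 ⟨⟨Nat.zero_le _, by simp⟩, ⟨Nat.zero_le _, by simp⟩, hab, hu⟩
  have hts : t = s ∨ t = -s := by
    rcases hs with rfl | rfl <;> rcases ht with rfl | rfl <;> norm_num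
  rw [← stdVec_val, ← stdVec_val]
  rcases lt_or_gt_of_ne hij' with hlt | hlt <;> rcases hts with h | h <;> rw [h]
  · exact ⟨_, hmem i j hij' s hs, by simp [signedPairRoot, hlt]⟩
  · exact ⟨_, hmem j i hij'.symm (-s) (h ▸ ht), by simp [signedPairRoot, hlt.not_gt, add_comm]⟩
  · exact ⟨_, hmem j i hij'.symm s hs, by simp [signedPairRoot, hlt, add_comm]⟩
  · exact ⟨_, hmem i j hij' s hs, by simp [signedPairRoot, hlt.not_gt]⟩

lemma rootsD_finite (r : ℕ) : (rootsD r).Finite :=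
  ((signedPairParams 0 r).finite_toSet.image _).subset (rootsD_subset_image_signedPairRoot r)

lemma ncard_rootsD_le (r : ℕ) : (rootsD r).ncard ≤ 2 * r * (r - 1) := by
  calc (rootsD r).ncard
      ≤ (signedPairRoot r '' signedPairParams 0 r).ncard :=
        Set.ncard_le_ncard (rootsD_subset_image_signedPairRoot r) (Set.toFinite _)
    _ ≤ (signedPairParams 0 r : Set ((ℕ × ℕ) × ℝ)).ncard := Set.ncard_image_le (Set.toFinite _)
    _ = 2 * r * (r - 1) := by rw [Set.ncard_coe_finset, card_signedPairParams]

lemma sub_mem_of_forall_sub_succ_mem {M S : Type*} [AddCommGroup M] [SetLike S M]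
    [AddSubgroupClass S M] {N : S} {f : ℕ → M} {lo hi : ℕ}
    (h : ∀ k, lo ≤ k → k < hi → f k - f (k + 1) ∈ N) {a b : ℕ}
    (ha : lo ≤ a) (ha' : a ≤ hi) (hb : lo ≤ b) (hb' : b ≤ hi) : f a - f b ∈ N := by
  have mono : ∀ a b, lo ≤ a → a ≤ b → b ≤ hi → f b - f a ∈ N := by
    intro a b ha hab hb
    rw [← Finset.sum_Ico_sub f hab]
    refine sum_mem fun k hk => ?_
    rw [Finset.mem_Ico] at hk
    rw [← neg_sub]
    exact neg_mem (h k (by omega) (by omega))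
  rcases le_total a b with hab | hab
  · rw [← neg_sub]
    exact neg_mem (mono a b ha hab hb')
  · exact mono b a hb hab ha'

def signedDiff (r : ℕ) (σ : ℕ → ℝ) (p : ℕ × ℕ) : EuclideanSpace ℝ (Fin r) :=
  σ p.1 • stdVec r p.1 - σ p.2 • stdVec r p.2

lemma mul_sub_one_le_ncard_rootsD_inter_span {σ : ℕ → ℝ} (hσ : ∀ k, σ k = 1 ∨ σ k = -1)
    {lo n : ℕ} (hn : lo + n ≤ r)
    (hP : ∀ k, lo ≤ k → k + 1 < lo + n → σ k • stdVec r k - σ (k + 1) • stdVec r (k + 1) ∈ P) :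
    n * (n - 1) ≤ (rootsD r ∩ Submodule.span ℝ P).ncard := by
  have hσ₀ : ∀ k, σ k ≠ 0 := fun k => by rcases hσ k with h | h <;> simp [h]
  set D := (Finset.Ico lo (lo + n)).offDiag
  have hD : D.card = n * (n - 1) := by
    rw [Finset.offDiag_card, Nat.card_Ico, Nat.add_sub_cancel_left, Nat.mul_sub_one]
  rw [← hD, ← Set.ncard_coe_finset]
  refine Set.ncard_le_ncard_of_injOn (signedDiff r σ) (fun p hp => ?_) (fun p hp q _ hpq => ?_)
    ((rootsD_finite r).inter_of_left _)
  · simp only [D, Finset.coe_offDiag, Set.mem_offDiag, Finset.coe_Ico, Set.mem_Ico] at hp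
    refine ⟨?_, ?_⟩
    · rw [signedDiff, sub_eq_add_neg, ← neg_smul]
      exact smul_stdVec_add_smul_stdVec_mem_rootsD (by omega) (by omega) hp.2.2 (hσ _)
        (by rcases hσ p.2 with h | h <;> simp [h])
    · exact sub_mem_of_forall_sub_succ_mem (f := fun k => σ k • stdVec r k) (hi := lo + n - 1)
        (fun k hk hk' => Submodule.subset_span (hP k hk (by omega)))
        hp.1.1 (by omega) hp.2.1.1 (by omega)
  · simp only [D, Finset.coe_offDiag, Set.mem_offDiag, Finset.coe_Ico, Set.mem_Ico] at hp
    simp only [signedDiff, sub_eq_add_neg, ← neg_smul] at hpq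
    rcases eq_or_eq_of_smul_stdVec_add_smul_stdVec_eq (by omega) (by omega) hp.2.2
      (hσ₀ _) (neg_ne_zero.2 (hσ₀ _)) hpq with ⟨h₁, h₂, -⟩ | ⟨h₁, -, h₃, -⟩
    · exact Prod.ext h₁ h₂
    · rw [h₁] at h₃
      exact absurd (by linarith : σ q.2 = 0) (hσ₀ _)

lemma two_mul_mul_sub_one_le_ncard_rootsD_inter_span {lo n : ℕ} (hn : lo + n ≤ r)
    (hP : ∀ k, lo ≤ k → k < lo + n → stdVec r k ∈ Submodule.span ℝ P) :
    2 * n * (n - 1) ≤ (rootsD r ∩ Submodule.span ℝ P).ncard := by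
  rw [← card_signedPairParams lo n, ← Set.ncard_coe_finset]
  refine Set.ncard_le_ncard_of_injOn _ (fun p hp => ⟨signedPairRoot_mem_rootsD hn hp, ?_⟩)
    (signedPairRoot_injOn hn) ((rootsD_finite r).inter_of_left _)
  rw [Finset.mem_coe, mem_signedPairParams] at hp
  exact add_mem (Submodule.smul_mem _ _ (hP _ hp.1.1 hp.1.2))
    (Submodule.smul_mem _ _ (hP _ hp.2.1.1 hp.2.1.2))

def chainRoot (r k : ℕ) : EuclideanSpace ℝ (Fin r) := stdVec r k - stdVec r (k + 1)

def forkRoot (r : ℕ) : EuclideanSpace ℝ (Fin r) := stdVec r (r - 2) + stdVec r (r - 1)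

lemma mem_simpleD {v : EuclideanSpace ℝ (Fin r)} (hv : v ∈ simpleD r) :
    (∃ k ≤ r - 2, v = chainRoot r k) ∨ v = forkRoot r := by
  rcases hv with ⟨i, j, hj, rfl⟩ | ⟨i, j, hi, hj, rfl⟩
  · refine Or.inl ⟨i, by omega, ?_⟩
    rw [chainRoot, ← hj, stdVec_val, stdVec_val]
  · rw [forkRoot, ← hi, ← hj, stdVec_val, stdVec_val]
    exact Or.inr rfl

lemma inner_chainRoot_chainRoot {k l : ℕ} (h : k + 2 ≤ l) :
    (inner ℝ (chainRoot r k) (chainRoot r l) : ℝ) = 0 := by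
  simp only [chainRoot, inner_sub_left, inner_sub_right, inner_stdVec]
  split_ifs <;> (try norm_num) <;> omega

lemma inner_chainRoot_forkRoot {k : ℕ} (hk : k + 2 ≤ r) (hk' : k + 3 ≠ r) :
    (inner ℝ (chainRoot r k) (forkRoot r) : ℝ) = 0 := by
  simp only [chainRoot, forkRoot, inner_sub_left, inner_add_right, inner_stdVec]
  split_ifs <;> (try norm_num) <;> omega

lemma chainRoot_ne_forkRoot (hr : 2 ≤ r) : chainRoot r (r - 2) ≠ forkRoot r := by
  intro h
  have := congrArg (· ⟨r - 1, by omega⟩) h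
  simp only [chainRoot, forkRoot, PiLp.sub_apply, PiLp.add_apply, stdVec_apply] at this
  rw [if_neg (by omega), if_pos (by omega)] at this
  norm_num at this

lemma Indecomposable.exists_inner_ne_zero (hP : Indecomposable P)
    (T : Set (EuclideanSpace ℝ (Fin r))) (h₁ : (P ∩ T).Nonempty)
    (h₂ : (P \ T).Nonempty) : ∃ a ∈ P ∩ T, ∃ b ∈ P \ T, (inner ℝ a b : ℝ) ≠ 0 :=
  hP _ _ (Set.inter_union_sdiff P T)
    (Set.disjoint_iff_inter_eq_empty.1 Set.disjoint_sdiff_inter.symm) h₁ h₂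

lemma ncard_le_card_of_subset_coe {α : Type*} {S : Set α} {F : Finset α} (h : S ⊆ F) :
    S.ncard ≤ F.card :=
  (Set.ncard_le_ncard h F.finite_toSet).trans_eq (Set.ncard_coe_finset F)

/-- Removing `α_k` from the chain disconnects `α_0, …, α_{k-1}` from the rest of the diagram. -/
lemma chainRoot_not_mem_of_lt (hsub : P ⊆ simpleD r) (hcard : P.ncard = r - 2)
    (hind : Indecomposable P) {k : ℕ} (hk : k + 3 ≤ r) (hkP : chainRoot r k ∉ P) :
    ∀ l < k, chainRoot r l ∉ P := by
  intro l hl hlP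
  set T := chainRoot r '' ↑(Finset.range k)
  have hPT : (P \ T).Nonempty := by
    rw [Set.nonempty_iff_ne_empty, Ne, Set.sdiff_eq_empty]
    intro hPT
    have := (Set.ncard_le_ncard hPT (Set.toFinite _)).trans
      (Set.ncard_image_le (Finset.finite_toSet _))
    rw [Set.ncard_coe_finset, Finset.card_range] at this
    omega
  obtain ⟨_, ⟨-, l', hl', rfl⟩, b, ⟨hbP, hbT⟩, hne⟩ :=
    hind.exists_inner_ne_zero T ⟨_, hlP, l, by simpa using hl, rfl⟩ hPT
  rw [Finset.coe_range, Set.mem_Iio] at hl'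
  rcases mem_simpleD (hsub hbP) with ⟨l'', -, rfl⟩ | rfl
  · have hl'' : k ≤ l'' := not_lt.1 fun h => hbT ⟨l'', by simpa using h, rfl⟩
    have hkl'' : k ≠ l'' := by rintro rfl; exact hkP hbP
    exact hne (inner_chainRoot_chainRoot (by omega))
  · exact hne (inner_chainRoot_forkRoot (by omega) (by omega))

lemma subset_simpleD_cases_of_chainRoot_mem (hr : 3 ≤ r) (hsub : P ⊆ simpleD r)
    (hcard : P.ncard = r - 2) (hmid : ∀ k, 1 ≤ k → k < r - 2 → chainRoot r k ∈ P) :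
    (∀ k < r - 2, chainRoot r k ∈ P) ∨ (∀ k, 1 ≤ k → k ≤ r - 2 → chainRoot r k ∈ P) ∨
      forkRoot r ∈ P := by
  by_cases h₀ : chainRoot r 0 ∈ P
  · refine Or.inl fun k hk => ?_
    rcases Nat.eq_zero_or_pos k with rfl | hk₀
    exacts [h₀, hmid k hk₀ hk]
  by_cases hlast : chainRoot r (r - 2) ∈ P
  · refine Or.inr (Or.inl fun k hk hk' => ?_)
    rcases hk'.lt_or_eq with hk' | rfl
    exacts [hmid k hk hk', hlast]
  by_cases hfork : forkRoot r ∈ P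
  · exact Or.inr (Or.inr hfork)
  exfalso
  have hPX : P ⊆ ↑((Finset.Ico 1 (r - 2)).image (chainRoot r)) := by
    intro v hv
    rcases mem_simpleD (hsub hv) with ⟨k, hk, rfl⟩ | rfl
    · have hk₀ : k ≠ 0 := by rintro rfl; exact h₀ hv
      have hk' : k ≠ r - 2 := by rintro rfl; exact hlast hv
      simp only [Finset.coe_image, Finset.coe_Ico]
      exact ⟨k, ⟨by omega, by omega⟩, rfl⟩
    · exact absurd hv hfork
  have := (ncard_le_card_of_subset_coe hPX).trans Finset.card_image_le
  rw [Nat.card_Ico] at this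
  omega

lemma indecomposable_subset_simpleD_of_chainRoot_not_mem (hsub : P ⊆ simpleD r)
    (hcard : P.ncard = r - 2) (hind : Indecomposable P) {k : ℕ} (hk : 1 ≤ k) (hk' : k + 3 ≤ r)
    (hkP : chainRoot r k ∉ P) :
    (∀ l, 2 ≤ l → l ≤ r - 2 → chainRoot r l ∈ P) ∧ forkRoot r ∈ P ∧ 5 ≤ r := by
  have hgap := chainRoot_not_mem_of_lt hsub hcard hind hk' hkP
  set X := (Finset.Ioc k (r - 2)).image (chainRoot r) ∪ {forkRoot r}
  have hPX : P ⊆ X := by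
    intro v hv
    rcases mem_simpleD (hsub hv) with ⟨l, hl, rfl⟩ | rfl
    · have hkl : k ≠ l := by rintro rfl; exact hkP hv
      have hkl' : ¬ l < k := fun h => hgap l h hv
      simp only [X, Finset.coe_union, Finset.coe_image, Finset.coe_Ioc]
      exact Or.inl ⟨l, ⟨by omega, hl⟩, rfl⟩
    · simp [X]
  have hX : X.card ≤ r - 2 - k + 1 := by
    refine (Finset.card_union_le _ _).trans (add_le_add ?_ (Finset.card_singleton _).le)
    exact Finset.card_image_le.trans_eq (Nat.card_Ioc _ _)
  obtain rfl : k = 1 := by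
    have := ncard_le_card_of_subset_coe hPX
    omega
  have hPX' : P = X := Set.eq_of_subset_of_ncard_le hPX (by rw [Set.ncard_coe_finset]; omega)
  have hchain : ∀ l, 2 ≤ l → l ≤ r - 2 → chainRoot r l ∈ P := fun l hl hl' => by
    rw [hPX']
    simp only [X, Finset.coe_union, Finset.coe_image, Finset.coe_Ioc]
    exact Or.inl ⟨l, ⟨hl, hl'⟩, rfl⟩
  have hfork : forkRoot r ∈ P := by simp [hPX', X]
  refine ⟨hchain, hfork, ?_⟩
  by_contra hr
  -- for `r = 4` the two remaining roots `α_2` and `e_2 + e_3` are orthogonal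
  obtain ⟨_, ⟨-, rfl⟩, b, ⟨hbP, hb⟩, hne⟩ := hind.exists_inner_ne_zero {forkRoot r}
    ⟨_, hfork, rfl⟩ ⟨_, hchain (r - 2) (by omega) le_rfl, chainRoot_ne_forkRoot (by omega)⟩
  rw [hPX'] at hbP
  simp only [X, Finset.coe_union, Finset.coe_image, Finset.coe_Ioc, Finset.coe_singleton,
    Set.mem_union, Set.mem_image, Set.mem_Ioc] at hbP
  obtain ⟨l, hl, rfl⟩ := hbP.resolve_right hb
  exact hne (by rw [real_inner_comm]; exact inner_chainRoot_forkRoot (by omega) (by omega))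

lemma indecomposable_subset_simpleD_cases (hr : 4 ≤ r) (hsub : P ⊆ simpleD r)
    (hcard : P.ncard = r - 2) (hind : Indecomposable P) :
    (∀ k < r - 2, chainRoot r k ∈ P) ∨
    (∀ k, 1 ≤ k → k ≤ r - 2 → chainRoot r k ∈ P) ∨
    ((∀ k, 1 ≤ k → k < r - 2 → chainRoot r k ∈ P) ∧ forkRoot r ∈ P) ∨
    ((∀ k, 2 ≤ k → k ≤ r - 2 → chainRoot r k ∈ P) ∧ forkRoot r ∈ P ∧ 5 ≤ r) := by
  by_cases hmid : ∀ k, 1 ≤ k → k < r - 2 → chainRoot r k ∈ P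
  · rcases subset_simpleD_cases_of_chainRoot_mem (by omega) hsub hcard hmid with h | h | h
    exacts [Or.inl h, Or.inr (Or.inl h), Or.inr (Or.inr (Or.inl ⟨hmid, h⟩))]
  · push Not at hmid
    obtain ⟨k, hk, hk', hkP⟩ := hmid
    exact Or.inr (Or.inr (Or.inr
      (indecomposable_subset_simpleD_of_chainRoot_not_mem hsub hcard hind hk (by omega) hkP)))

lemma stdVec_mem_span_of_chainRoot_mem_of_forkRoot_mem
    (hr : 4 ≤ r) (hchain : ∀ k, 2 ≤ k → k ≤ r - 2 → chainRoot r k ∈ P) (hfork : forkRoot r ∈ P) :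
    ∀ k, 2 ≤ k → k < r → stdVec r k ∈ Submodule.span ℝ P := by
  have hα := Submodule.subset_span (R := ℝ) (hchain (r - 2) (by omega) le_rfl)
  have hβ := Submodule.subset_span (R := ℝ) hfork
  have hpenult : stdVec r (r - 2) ∈ Submodule.span ℝ P := by
    have : stdVec r (r - 2) = (2 : ℝ)⁻¹ • (chainRoot r (r - 2) + forkRoot r) := by
      rw [chainRoot, forkRoot, show r - 2 + 1 = r - 1 by omega]
      module
    rw [this]
    exact Submodule.smul_mem _ _ (add_mem hα hβ)
  intro k hk hk'
  rcases (show k ≤ r - 2 ∨ k = r - 1 by omega) with hk'' | rfl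
  · have := sub_mem_of_forall_sub_succ_mem (N := Submodule.span ℝ P) (f := stdVec r) (lo := 2)
      (hi := r - 2) (fun j hj hj' => Submodule.subset_span (hchain j hj (by omega)))
      hk hk'' (by omega) le_rfl
    simpa using add_mem this hpenult
  · rw [show stdVec r (r - 1) = forkRoot r - stdVec r (r - 2) by rw [forkRoot]; abel]
    exact sub_mem hβ hpenult

lemma le_ncard_rootsD_inter_span (hr : 4 ≤ r)
    (hsub : P ⊆ simpleD r) (hcard : P.ncard = r - 2) (hind : Indecomposable P) :
    (r - 1) * (r - 2) ≤ (rootsD r ∩ Submodule.span ℝ P).ncard := by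
  rw [show r - 2 = r - 1 - 1 by omega]
  rcases indecomposable_subset_simpleD_cases hr hsub hcard hind with
    h | h | ⟨h, hfork⟩ | ⟨h, hfork, hr5⟩
  · refine mul_sub_one_le_ncard_rootsD_inter_span (σ := fun _ => 1) (lo := 0)
      (fun _ => Or.inl rfl) (by omega) fun k _ hk => ?_
    simpa [chainRoot] using h k (by omega)
  · refine mul_sub_one_le_ncard_rootsD_inter_span (σ := fun _ => 1) (lo := 1)
      (fun _ => Or.inl rfl) (by omega) fun k hk hk' => ?_
    simpa [chainRoot] using h k hk (by omega)
  · refine mul_sub_one_le_ncard_rootsD_inter_span (σ := fun k => if k = r - 1 then -1 else 1)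
      (lo := 1) (fun k => by split_ifs <;> simp) (by omega) fun k hk hk' => ?_
    rcases (show k < r - 2 ∨ k = r - 2 by omega) with hk'' | rfl
    · simpa [chainRoot, show k ≠ r - 1 by omega, show k + 1 ≠ r - 1 by omega] using h k hk hk''
    · simpa [forkRoot, show r - 2 ≠ r - 1 by omega, show r - 2 + 1 = r - 1 by omega] using hfork
  · refine le_trans ?_ (two_mul_mul_sub_one_le_ncard_rootsD_inter_span (lo := 2) (n := r - 2)
      (by omega) fun k hk hk' =>
        stdVec_mem_span_of_chainRoot_mem_of_forkRoot_mem hr h hfork k hk (by omega))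
    obtain ⟨m, rfl⟩ : ∃ m, r = m + 5 := ⟨r - 5, by omega⟩
    simp only [Nat.add_succ_sub_one, Nat.reduceSubDiff]
    nlinarith

end

/-- in type D_r (r > 3), for an indecomposable simple subsystem
Pi' ⊆ Π of cardinality r − 2, one has |Δ ∩ span(Pi')| ≥ (r−1)(r−2) and hence
|Δ \ span(Pi')| ≤ (r−1)(r+2). -/
theorem stmt_12 (r : ℕ) (hr : 3 < r)
    (Pi' : Set (EuclideanSpace ℝ (Fin r)))
    (hsub : Pi' ⊆ simpleD r) (hcard : Pi'.ncard = r - 2)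
    (hind : Indecomposable Pi') :
    (r - 1) * (r - 2) ≤
      (rootsD r ∩ (Submodule.span ℝ Pi' : Set (EuclideanSpace ℝ (Fin r)))).ncard ∧
    (rootsD r \ (Submodule.span ℝ Pi' : Set (EuclideanSpace ℝ (Fin r)))).ncard ≤
      (r - 1) * (r + 2) := by
  have hlower := le_ncard_rootsD_inter_span hr hsub hcard hind
  refine ⟨hlower, ?_⟩
  have hsplit := Set.ncard_inter_add_ncard_sdiff_eq_ncard (rootsD r)
    (Submodule.span ℝ Pi' : Set (EuclideanSpace ℝ (Fin r))) (rootsD_finite r)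
  have htotal : (rootsD r).ncard ≤ (r - 1) * (r - 2) + (r - 1) * (r + 2) := by
    refine (ncard_rootsD_le r).trans_eq ?_
    obtain ⟨m, rfl⟩ : ∃ m, r = m + 4 := ⟨r - 4, by omega⟩
    simp only [Nat.add_succ_sub_one, Nat.reduceSubDiff]
    ring
  omega

end
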